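/- There exist r > 0 with the closed disk of radius r about t₀ contained in U, and a constant M, such that hₙ(t) = 4^{−n}·log max( |Aₙ(t)/(t−t₀)^{aₙ}|, |Bₙ(t)/(t−t₀)^{aₙ}| ) satisfies hₙ(t) ≤ M for all n ≥ 0 and all t with 0 < |t − t₀| ≤ r. -/

import Mathlib

open Filter Metric Set Topology

/-!
On `K = {|t - t₀| = r} ∪ {|t - t₀| = r / 2}` the maps `F_t` are nondegenerate and homogeneous of
degree 4, so by compactness `log ‖F_t Y‖ = 4 log ‖Y‖ + O(1)` uniformly there, and iterating gives
`|log ‖F_tⁿ (X t)‖| ≤ L 4ⁿ` on `K`. The quotient `F_tⁿ (X t) / (t - t₀)^{aₙ}` is holomorphic on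
the disk, so by the maximum principle it is at most `e^{L 4ⁿ} / r^{aₙ}`. Evaluating this at a point
of `{|t - t₀| = r / 2}`, where the numerator is at least `e^{-L 4ⁿ}`, gives `aₙ log 2 ≤ 2 L 4ⁿ`;
hence `r^{-aₙ} = e^{O(4ⁿ)}` and the quotient is `e^{O(4ⁿ)}` on the whole punctured disk.
-/

/-- The family of homogeneous degree-4 maps `F_t(z,w) = (Σ_j c₀ⱼ(t)·zʲ·w⁴⁻ʲ, Σ_j c₁ⱼ(t)·zʲ·w⁴⁻ʲ)`
determined by the coefficient functions `c : Fin 2 → Fin 5 → ℂ → ℂ`. -/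
noncomputable def famLift (c : Fin 2 → Fin 5 → ℂ → ℂ) (t : ℂ) : ℂ × ℂ → ℂ × ℂ :=
  fun X => (∑ j : Fin 5, c 0 j t * X.1 ^ (j : ℕ) * X.2 ^ (4 - (j : ℕ)),
            ∑ j : Fin 5, c 1 j t * X.1 ^ (j : ℕ) * X.2 ^ (4 - (j : ℕ)))

theorem abs_le_mul_pow_of_abs_sub_mul_le {u : ℕ → ℝ} {d B C : ℝ} (hd : 2 ≤ d)
    (h0 : |u 0| ≤ B) (hstep : ∀ n, |u (n + 1) - d * u n| ≤ C) (n : ℕ) :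
    |u n| ≤ (B + C) * d ^ n := by
  have hC : 0 ≤ C := (abs_nonneg _).trans (hstep 0)
  -- the slack `- C` is what makes the induction close, since `d - 1 ≥ 1`
  suffices h : |u n| ≤ (B + C) * d ^ n - C by linarith
  induction n with
  | zero => simpa using h0
  | succ n ih =>
    calc |u (n + 1)| ≤ d * |u n| + C := by
          have := abs_sub_abs_le_abs_sub (u (n + 1)) (d * u n)
          rw [abs_mul, abs_of_nonneg (by linarith : (0 : ℝ) ≤ d)] at this
          linarith [hstep n]
      _ ≤ d * ((B + C) * d ^ n - C) + C := by gcongr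
      _ ≤ (B + C) * d ^ (n + 1) - C := by rw [pow_succ]; nlinarith

theorem IsCompact.exists_abs_log_norm_sub_le_of_homogeneous {α E F : Type*} [TopologicalSpace α]
    [NormedAddCommGroup E] [NormedSpace ℝ E] [ProperSpace E] [NormedAddCommGroup F]
    [NormedSpace ℝ F] {K : Set α} (hK : IsCompact K) {f : α → E → F} {d : ℕ}
    (hf : ContinuousOn (fun p : α × E => f p.1 p.2) (K ×ˢ sphere 0 1))
    (hhom : ∀ t ∈ K, ∀ s : ℝ, 0 < s → ∀ Y, f t (s • Y) = s ^ d • f t Y)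
    (hne : ∀ t ∈ K, ∀ Y, Y ≠ 0 → f t Y ≠ 0) :
    ∃ C, ∀ t ∈ K, ∀ Y, Y ≠ 0 → |Real.log ‖f t Y‖ - d * Real.log ‖Y‖| ≤ C := by
  obtain ⟨C, hC⟩ := (hK.prod (isCompact_sphere 0 1)).exists_bound_of_continuousOn
    (hf.norm.log fun p hp => norm_ne_zero_iff.2 <|
      hne p.1 hp.1 p.2 (ne_zero_of_mem_unit_sphere ⟨p.2, hp.2⟩))
  refine ⟨C, fun t ht Y hY => ?_⟩
  have hY' : 0 < ‖Y‖ := norm_pos_iff.2 hY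
  have hW : ‖Y‖⁻¹ • Y ∈ sphere (0 : E) 1 := by
    rw [mem_sphere_zero_iff_norm, norm_smul, norm_inv, norm_norm, inv_mul_cancel₀ hY'.ne']
  have hfW : f t (‖Y‖⁻¹ • Y) ≠ 0 := hne t ht _ (ne_zero_of_mem_unit_sphere ⟨_, hW⟩)
  have hfY : ‖f t Y‖ = ‖Y‖ ^ d * ‖f t (‖Y‖⁻¹ • Y)‖ := by
    conv_lhs => rw [← smul_inv_smul₀ hY'.ne' Y, hhom t ht _ hY']
    rw [norm_smul, norm_pow, norm_norm]
  have hbound := hC (t, _) ⟨ht, hW⟩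
  rwa [Real.norm_eq_abs, ← add_sub_cancel_left (d * Real.log ‖Y‖) (Real.log _), ← Real.log_pow,
    ← Real.log_mul (by positivity) (norm_ne_zero_iff.2 hfW), ← hfY, Real.log_pow] at hbound

theorem norm_div_pow_le_of_forall_mem_sphere {E : Type*} [NormedAddCommGroup E]
    [NormedSpace ℂ E] {f g : ℂ → E} {t₀ t : ℂ} {r M : ℝ} {a : ℕ}
    (hf : DiffContOnCl ℂ f (ball t₀ r)) (hg : DifferentiableAt ℂ g t₀)
    (hfg : ∀ᶠ z in 𝓝 t₀, f z = (z - t₀) ^ a • g z) (hM : ∀ z ∈ sphere t₀ r, ‖f z‖ ≤ M)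
    (ht : t ∈ closedBall t₀ r) (ht₀ : t ≠ t₀) :
    ‖f t‖ / ‖t - t₀‖ ^ a ≤ M / r ^ a := by
  classical
  have hr : 0 < r := (dist_pos.2 ht₀).trans_le ht
  -- maximum modulus for `f z / (z - t₀) ^ a`, its singularity at `t₀` removed by `g`
  set q : ℂ → E := fun z => ((z - t₀) ^ a)⁻¹ • f z
  set G := Function.update q t₀ (g t₀)
  have hGq : ∀ z ≠ t₀, G =ᶠ[𝓝 z] q := fun z hz =>
    (eventually_ne_nhds hz).mono fun w hw => Function.update_of_ne hw _ _
  have hqd : ∀ z ≠ t₀, DifferentiableAt ℂ (fun w : ℂ => ((w - t₀) ^ a)⁻¹) z := fun z hz =>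
    ((differentiableAt_id.sub_const t₀).pow a).inv (pow_ne_zero _ (sub_ne_zero.2 hz))
  have hGt₀ : DifferentiableAt ℂ G t₀ := by
    refine hg.congr_of_eventuallyEq ?_
    filter_upwards [hfg] with z hz
    rcases eq_or_ne z t₀ with rfl | hz₀
    · simp [G]
    · rw [(hGq z hz₀).eq_of_nhds]
      change ((z - t₀) ^ a)⁻¹ • f z = g z
      rw [hz, smul_smul, inv_mul_cancel₀ (pow_ne_zero _ (sub_ne_zero.2 hz₀)), one_smul]
  have hG : DiffContOnCl ℂ G (ball t₀ r) := by
    refine ⟨fun z hz => ?_, fun z hz => ?_⟩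
    · rcases eq_or_ne z t₀ with rfl | hz₀
      · exact hGt₀.differentiableWithinAt
      · exact (((hqd z hz₀).smul (hf.differentiableAt isOpen_ball hz)).congr_of_eventuallyEq
          (hGq z hz₀)).differentiableWithinAt
    · rcases eq_or_ne z t₀ with rfl | hz₀
      · exact hGt₀.continuousAt.continuousWithinAt
      · exact ((hqd z hz₀).continuousAt.continuousWithinAt.smul
          (hf.continuousOn z hz)).congr_of_eventuallyEq
            (nhdsWithin_le_nhds (hGq z hz₀)) (hGq z hz₀).eq_of_nhds
  have hq : ∀ z ≠ t₀, ‖G z‖ = ‖f z‖ / ‖z - t₀‖ ^ a := fun z hz => by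
    rw [(hGq z hz).eq_of_nhds, norm_smul, norm_inv, norm_pow, inv_mul_eq_div]
  rw [← hq t ht₀]
  refine Complex.norm_le_of_forall_mem_frontier_norm_le isBounded_ball hG (fun z hz => ?_)
    (by rwa [closure_ball t₀ hr.ne'])
  rw [frontier_ball t₀ hr.ne'] at hz
  have hz₀ : z ≠ t₀ := ne_of_mem_sphere hz hr.ne'
  rw [hq z hz₀, ← dist_eq_norm, mem_sphere.1 hz]
  exact div_le_div_of_nonneg_right (hM z hz) (by positivity)

theorem norm_div_pow_le_exp_of_forall_mem_sphere {E : Type*} [NormedAddCommGroup E]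
    [NormedSpace ℂ E] {f g : ℂ → E} {t₀ t₁ t : ℂ} {r A : ℝ} {a : ℕ}
    (hf : DiffContOnCl ℂ f (ball t₀ r)) (hg : DifferentiableAt ℂ g t₀)
    (hfg : ∀ᶠ z in 𝓝 t₀, f z = (z - t₀) ^ a • g z)
    (hsphere : ∀ z ∈ sphere t₀ r, ‖f z‖ ≤ Real.exp A) (ht₁ : t₁ ∈ sphere t₀ (r / 2))
    (hlow : Real.exp (-A) ≤ ‖f t₁‖) (ht : t ∈ closedBall t₀ r) (ht₀ : t ≠ t₀) :
    ‖f t‖ / ‖t - t₀‖ ^ a ≤ Real.exp (A * (1 + 2 * |Real.log r| / Real.log 2)) := by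
  have hr : 0 < r := (dist_pos.2 ht₀).trans_le ht
  have hlog2 : 0 < Real.log 2 := Real.log_pos one_lt_two
  have horder : a * Real.log 2 ≤ 2 * A := by
    have ht₁' : t₁ ∈ closedBall t₀ r := sphere_subset_closedBall.trans
      (closedBall_subset_closedBall (by linarith)) ht₁
    have h := norm_div_pow_le_of_forall_mem_sphere hf hg hfg hsphere ht₁'
      (ne_of_mem_sphere ht₁ (by positivity))
    rw [mem_sphere_iff_norm.1 ht₁, div_pow, div_div_eq_mul_div,
      div_le_div_iff_of_pos_right (by positivity)] at h
    have : Real.exp (-A + a * Real.log 2) ≤ Real.exp A := by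
      rw [Real.exp_add, Real.exp_nat_mul, Real.exp_log two_pos]
      exact (mul_le_mul_of_nonneg_right hlow (by positivity)).trans h
    linarith [Real.exp_le_exp.1 this]
  have ha : (a : ℝ) ≤ 2 * A / Real.log 2 := (le_div_iff₀ hlog2).2 horder
  calc ‖f t‖ / ‖t - t₀‖ ^ a ≤ Real.exp A / r ^ a :=
        norm_div_pow_le_of_forall_mem_sphere hf hg hfg hsphere ht ht₀
    _ = Real.exp (A - a * Real.log r) := by
        rw [Real.exp_sub, Real.exp_nat_mul, Real.exp_log hr]
    _ ≤ Real.exp (A * (1 + 2 * |Real.log r| / Real.log 2)) := by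
        gcongr
        calc A - a * Real.log r ≤ A + a * |Real.log r| := by
              nlinarith [neg_abs_le (Real.log r), (a.cast_nonneg : (0 : ℝ) ≤ a)]
          _ ≤ A + 2 * A / Real.log 2 * |Real.log r| := by gcongr
          _ = A * (1 + 2 * |Real.log r| / Real.log 2) := by ring

theorem famLift_smul (c : Fin 2 → Fin 5 → ℂ → ℂ) (t s : ℂ) (Y : ℂ × ℂ) :
    famLift c t (s • Y) = s ^ 4 • famLift c t Y := by
  have hterm (i : Fin 2) (j : Fin 5) : c i j t * (s * Y.1) ^ (j : ℕ) * (s * Y.2) ^ (4 - (j : ℕ)) =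
      s ^ 4 * (c i j t * Y.1 ^ (j : ℕ) * Y.2 ^ (4 - (j : ℕ))) := by
    calc _ = s ^ ((j : ℕ) + (4 - (j : ℕ))) * (c i j t * Y.1 ^ (j : ℕ) * Y.2 ^ (4 - (j : ℕ))) := by
          ring
      _ = _ := by rw [Nat.add_sub_of_le (Fin.is_le j)]
  simp only [famLift, Prod.smul_fst, Prod.smul_snd, smul_eq_mul, Prod.smul_mk, Finset.mul_sum,
    hterm]

theorem continuousOn_famLift {c : Fin 2 → Fin 5 → ℂ → ℂ} {K : Set ℂ}
    (hc : ∀ i j, ContinuousOn (c i j) K) :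
    ContinuousOn (fun p : ℂ × (ℂ × ℂ) => famLift c p.1 p.2) (K ×ˢ univ) := by
  have hc' : ∀ i j, ContinuousOn (fun p : ℂ × (ℂ × ℂ) => c i j p.1) (K ×ˢ univ) :=
    fun i j => (hc i j).comp continuousOn_fst fun p hp => hp.1
  have hcoord (i : Fin 2) : ContinuousOn (fun p : ℂ × (ℂ × ℂ) =>
      ∑ j : Fin 5, c i j p.1 * p.2.1 ^ (j : ℕ) * p.2.2 ^ (4 - (j : ℕ))) (K ×ˢ univ) :=
    continuousOn_finsetSum _ fun j _ => ((hc' i j).mul (by fun_prop)).mul (by fun_prop)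
  exact (hcoord 0).prodMk (hcoord 1)

theorem DifferentiableOn.famLift_iterate {c : Fin 2 → Fin 5 → ℂ → ℂ} {U : Set ℂ}
    {X : ℂ → ℂ × ℂ} (hc : ∀ i j, DifferentiableOn ℂ (c i j) U) (hX : DifferentiableOn ℂ X U)
    (n : ℕ) : DifferentiableOn ℂ (fun t => (famLift c t)^[n] (X t)) U := by
  induction n with
  | zero => simpa using hX
  | succ n ih =>
    simp only [Function.iterate_succ_apply']
    have hfst := ih.fst
    have hsnd := ih.snd
    unfold famLift
    fun_prop

theorem famLift_iterate_ne_zero {c : Fin 2 → Fin 5 → ℂ → ℂ} {t : ℂ}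
    (hzero : ∀ Y, famLift c t Y = 0 → Y = 0) {Y : ℂ × ℂ} (hY : Y ≠ 0) (n : ℕ) :
    (famLift c t)^[n] Y ≠ 0 :=
  MapsTo.iterate (s := {0}ᶜ) (fun _ hY h => hY (hzero _ h)) n hY

theorem exists_norm_famLift_iterate_bounds {c : Fin 2 → Fin 5 → ℂ → ℂ} {K : Set ℂ}
    {X : ℂ → ℂ × ℂ} (hK : IsCompact K) (hc : ∀ i j, ContinuousOn (c i j) K)
    (hzero : ∀ t ∈ K, ∀ Y, famLift c t Y = 0 → Y = 0) (hX : ContinuousOn X K)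
    (hXne : ∀ t ∈ K, X t ≠ 0) :
    ∃ L, ∀ n, ∀ t ∈ K, Real.exp (-(L * 4 ^ n)) ≤ ‖(famLift c t)^[n] (X t)‖ ∧
      ‖(famLift c t)^[n] (X t)‖ ≤ Real.exp (L * 4 ^ n) := by
  obtain ⟨C, hC⟩ := hK.exists_abs_log_norm_sub_le_of_homogeneous (f := famLift c) (d := 4)
    ((continuousOn_famLift hc).mono (prod_mono le_rfl (subset_univ _)))
    (fun t _ s _ Y => by
      rw [← Complex.coe_smul, famLift_smul, ← Complex.ofReal_pow, Complex.coe_smul])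
    (fun t ht Y hY h => hY (hzero t ht Y h))
  obtain ⟨B, hB⟩ := hK.exists_bound_of_continuousOn
    (hX.norm.log fun t ht => norm_ne_zero_iff.2 (hXne t ht))
  have hne (n : ℕ) (t : ℂ) (ht : t ∈ K) : (famLift c t)^[n] (X t) ≠ 0 :=
    famLift_iterate_ne_zero (hzero t ht) (hXne t ht) n
  refine ⟨B + C, fun n t ht => ?_⟩
  have hlog : |Real.log ‖(famLift c t)^[n] (X t)‖| ≤ (B + C) * 4 ^ n :=
    abs_le_mul_pow_of_abs_sub_mul_le (u := fun n => Real.log ‖(famLift c t)^[n] (X t)‖)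
      (by norm_num) (hB t ht)
      (fun n => by simpa [Function.iterate_succ_apply'] using hC t ht _ (hne n t ht)) n
  have hpos := norm_pos_iff.2 (hne n t ht)
  exact ⟨(Real.le_log_iff_exp_le hpos).1 (abs_le.1 hlog).1,
    (Real.log_le_iff_le_exp hpos).1 (abs_le.1 hlog).2⟩

theorem max_norm_div_eq_norm_div (Y : ℂ × ℂ) (s : ℂ) :
    max ‖Y.1 / s‖ ‖Y.2 / s‖ = ‖Y‖ / ‖s‖ := by
  rw [norm_div, norm_div, max_div_div_right (norm_nonneg s), Prod.norm_def]

theorem hn_uniformly_bounded_general (U : Set ℂ) (hU : IsOpen U) (t₀ : ℂ) (ht₀ : t₀ ∈ U)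
    (c : Fin 2 → Fin 5 → ℂ → ℂ) (hc : ∀ i j, DifferentiableOn ℂ (c i j) U)
    (hzero : ∀ t ∈ U, t ≠ t₀ → ∀ Y : ℂ × ℂ, famLift c t Y = 0 → Y = 0)
    (X : ℂ → ℂ × ℂ) (hX : DifferentiableOn ℂ X U) (hXne : ∀ t ∈ U, X t ≠ 0)
    (a : ℕ → ℕ)
    (ha : ∀ n : ℕ, ∃ g₁ g₂ : ℂ → ℂ, AnalyticAt ℂ g₁ t₀ ∧ AnalyticAt ℂ g₂ t₀ ∧
      (g₁ t₀ ≠ 0 ∨ g₂ t₀ ≠ 0) ∧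
      ∀ᶠ t in nhds t₀, ((famLift c t)^[n] (X t)).1 = (t - t₀) ^ a n * g₁ t ∧
        ((famLift c t)^[n] (X t)).2 = (t - t₀) ^ a n * g₂ t) :
    ∃ r : ℝ, 0 < r ∧ Metric.closedBall t₀ r ⊆ U ∧ ∃ M : ℝ,
      ∀ n : ℕ, ∀ t : ℂ, 0 < ‖t - t₀‖ → ‖t - t₀‖ ≤ r →
        Real.log (max (‖((famLift c t)^[n] (X t)).1 / (t - t₀) ^ a n‖)
            (‖((famLift c t)^[n] (X t)).2 / (t - t₀) ^ a n‖)) / 4 ^ n ≤ M := by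
  obtain ⟨r, hr, hrU⟩ := nhds_basis_closedBall.mem_iff.1 (hU.mem_nhds ht₀)
  set K := sphere t₀ r ∪ sphere t₀ (r / 2)
  have hKU : K ⊆ U := union_subset (sphere_subset_closedBall.trans hrU)
    (sphere_subset_closedBall.trans ((closedBall_subset_closedBall (by linarith)).trans hrU))
  have hKt₀ : ∀ t ∈ K, t ≠ t₀ := by
    rintro t (ht | ht) <;> exact ne_of_mem_sphere ht (by positivity)
  obtain ⟨L, hL⟩ := exists_norm_famLift_iterate_bounds
    ((isCompact_sphere t₀ r).union (isCompact_sphere t₀ (r / 2)))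
    (fun i j => (hc i j).continuousOn.mono hKU) (fun t ht => hzero t (hKU ht) (hKt₀ t ht))
    (hX.continuousOn.mono hKU) (fun t ht => hXne t (hKU ht))
  obtain ⟨t₁, ht₁⟩ := (NormedSpace.sphere_nonempty (x := t₀)).2 (by positivity : 0 ≤ r / 2)
  refine ⟨r, hr, hrU, L * (1 + 2 * |Real.log r| / Real.log 2), fun n t ht ht' => ?_⟩
  obtain ⟨g₁, g₂, hg₁, hg₂, -, hfg⟩ := ha n
  have htU : t ∈ closedBall t₀ r := mem_closedBall_iff_norm.2 ht'
  have ht₀' : t ≠ t₀ := sub_ne_zero.1 (norm_pos_iff.1 ht)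
  have hbound := norm_div_pow_le_exp_of_forall_mem_sphere (A := L * 4 ^ n)
    ((DifferentiableOn.famLift_iterate hc hX n).diffContOnCl_ball hrU)
    (hg₁.differentiableAt.prodMk hg₂.differentiableAt) (hfg.mono fun z hz => Prod.ext hz.1 hz.2)
    (fun z hz => (hL n z (.inl hz)).2) ht₁ (hL n t₁ (.inr ht₁)).1 htU ht₀'
  have hpos : 0 < ‖(famLift c t)^[n] (X t)‖ :=
    norm_pos_iff.2 (famLift_iterate_ne_zero (hzero t (hrU htU) ht₀') (hXne t (hrU htU)) n)
  rw [max_norm_div_eq_norm_div, norm_pow, div_le_iff₀ (by positivity),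
    Real.log_le_iff_le_exp (by positivity)]
  convert hbound using 2
  ring

/-- With `F_tⁿ(X(t)) = (Aₙ(t), Bₙ(t))` and `aₙ = min(ord_{t₀} Aₙ, ord_{t₀} Bₙ)`:
there are `r > 0` with the closed disk of radius `r` about `t₀` contained in `U`, and a
constant `M`, so that `hₙ(t) = 4^{−n} log max(|Aₙ(t)/(t−t₀)^{aₙ}|, |Bₙ(t)/(t−t₀)^{aₙ}|)`
satisfies `hₙ(t) ≤ M` for all `n ≥ 0` and all `t` with `0 < |t − t₀| ≤ r`. -/
theorem hn_uniformly_bounded (U : Set ℂ) (hU : IsOpen U) (hUconn : IsConnected U)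
    (t₀ : ℂ) (ht₀ : t₀ ∈ U)
    (c : Fin 2 → Fin 5 → ℂ → ℂ) (hc : ∀ i j, DifferentiableOn ℂ (c i j) U)
    (hzero : ∀ t ∈ U, t ≠ t₀ → ∀ Y : ℂ × ℂ, famLift c t Y = 0 → Y = 0)
    (X : ℂ → ℂ × ℂ) (hX : DifferentiableOn ℂ X U) (hXne : ∀ t ∈ U, X t ≠ 0)
    (a : ℕ → ℕ)
    (ha : ∀ n : ℕ, ∃ g₁ g₂ : ℂ → ℂ, AnalyticAt ℂ g₁ t₀ ∧ AnalyticAt ℂ g₂ t₀ ∧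
      (g₁ t₀ ≠ 0 ∨ g₂ t₀ ≠ 0) ∧
      ∀ᶠ t in nhds t₀, ((famLift c t)^[n] (X t)).1 = (t - t₀) ^ a n * g₁ t ∧
        ((famLift c t)^[n] (X t)).2 = (t - t₀) ^ a n * g₂ t) :
    ∃ r : ℝ, 0 < r ∧ Metric.closedBall t₀ r ⊆ U ∧ ∃ M : ℝ,
      ∀ n : ℕ, ∀ t : ℂ, 0 < ‖t - t₀‖ → ‖t - t₀‖ ≤ r →
        Real.log (max (‖((famLift c t)^[n] (X t)).1 / (t - t₀) ^ a n‖)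
            (‖((famLift c t)^[n] (X t)).2 / (t - t₀) ^ a n‖)) / 4 ^ n ≤ M :=
  hn_uniformly_bounded_general U hU t₀ ht₀ c hc hzero X hX hXne a ha
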